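/- arXiv:math/0608586 — 2 statements merged into one kernel-verified Lean document; each statement's English description precedes it below -/
import Mathlib

section
/- Let Δ₊ be the set of positive roots of a semisimple complex Lie algebra g with respect to a Cartan subalgebra h, with simple roots α₁,…,α_l. If μ ∈ h is chosen so that the values α₁(μ),…,α_l(μ) are algebraically independent over ℚ, then the numbers 1/⟨α, μ⟩, for α ∈ Δ₊, are linearly independent over ℚ. -/
/-!
Write each positive root as `α = ∑ kᵢ αᵢ` with `kᵢ ∈ ℕ`; then `α(μ)` is the value at
`x = (αᵢ(μ))ᵢ` of the linear form `ℓ_α = ∑ kᵢ Xᵢ ∈ ℚ[X₁, …, X_l]`. Algebraic independence makes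
evaluation at `x` injective, so a rational relation `∑ c_α / α(μ) = 0` becomes, after clearing
denominators, the polynomial identity `∑ c_α ∏_{β ≠ α} ℓ_β = 0`. The `ℓ_α` are primes of the UFD
`ℚ[X]`, pairwise non-associated because the roots are pairwise non-proportional, so `ℓ_α` can only
divide `c_α ∏_{β ≠ α} ℓ_β` if `c_α = 0`.
-/

open Finset

theorem linearIndependent_inv_of_prime {K R F ι : Type*} [Field K] [CommRing R] [IsDomain R]
    [Algebra K R] [Field F] [Algebra K F] [Fintype ι] {φ : R →ₐ[K] F}
    (hφ : Function.Injective φ) {p : ι → R} (hp : ∀ i, Prime (p i))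
    (hassoc : Pairwise fun i j => ¬Associated (p i) (p j)) :
    LinearIndependent K fun i => (φ (p i))⁻¹ := by
  classical
  rw [Fintype.linearIndependent_iff]
  intro c hc i
  have hφp : ∀ j, φ (p j) ≠ 0 := fun j => (map_ne_zero_iff φ hφ).2 (hp j).ne_zero
  have hrel : ∑ j, c j • ∏ k ∈ univ.erase j, p k = 0 := by
    apply hφ
    have hterm : ∀ j, φ (c j • ∏ k ∈ univ.erase j, p k) = (∏ k, φ (p k)) * c j • (φ (p j))⁻¹ := by
      intro j
      rw [← mul_prod_erase univ (fun k => φ (p k)) (mem_univ j), map_smul, map_prod,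
        mul_smul_comm, mul_right_comm, mul_inv_cancel₀ (hφp j), one_mul]
    rw [map_sum, sum_congr rfl fun j _ => hterm j, ← mul_sum, hc, mul_zero, map_zero]
  have hdvd : p i ∣ c i • ∏ k ∈ univ.erase i, p k := by
    rw [← add_sum_erase _ _ (mem_univ i), add_eq_zero_iff_eq_neg] at hrel
    rw [hrel, dvd_neg]
    exact dvd_sum fun j hj => dvd_smul_of_dvd _ <|
      dvd_prod_of_mem p (mem_erase.2 ⟨(ne_of_mem_erase hj).symm, mem_univ i⟩)
  by_contra hci
  rw [Algebra.smul_def] at hdvd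
  rcases (hp i).dvd_or_dvd hdvd with h | h
  · exact (hp i).not_isUnit (isUnit_of_dvd_unit h ((isUnit_iff_ne_zero.2 hci).map _))
  · obtain ⟨j, hj, hij⟩ := ((hp i).dvd_finsetProd_iff _).1 h
    exact hassoc (ne_of_mem_erase hj).symm ((hp i).associated_of_dvd (hp j) hij)

namespace MvPolynomial

variable {σ K : Type*} [Field K]

theorem prime_sumSMulX [Finite σ] {c : σ →₀ K} (hc : c ≠ 0) : Prime (sumSMulX c) :=
  (irreducible_sumSMulX c (Finsupp.support_nonempty_iff.2 hc) fun r hr => by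
    obtain ⟨i, hi⟩ := Finsupp.ne_iff.1 hc
    exact (isUnit_iff_ne_zero.2 fun hr0 => hi (by simpa [hr0] using hr i))).prime

theorem exists_eq_smul_of_associated_sumSMulX {c d : σ →₀ K}
    (h : Associated (sumSMulX c) (sumSMulX d)) : ∃ r : K, d = r • c := by
  obtain ⟨u, hu⟩ := h
  obtain ⟨r, -, hr⟩ := isUnit_iff_eq_C_of_isReduced.1 u.isUnit
  refine ⟨r, Finsupp.ext fun i => ?_⟩
  have := congr_arg (coeff (Finsupp.single i 1)) hu
  rw [hr, mul_comm, coeff_C_mul, coeff_sumSMulX, coeff_sumSMulX] at this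
  simp [← this]

theorem aeval_sumSMulX [Fintype σ] {R A : Type*} [CommRing R] [CommRing A] [Algebra R A]
    (x : σ → A) (c : σ →₀ R) : aeval x (sumSMulX c) = ∑ i, c i • x i := by
  rw [sumSMulX, Finsupp.linearCombination_apply, Finsupp.sum_fintype _ _ (by simp), map_sum]
  simp

end MvPolynomial

theorem stmt_3_general (L : Type) [LieRing L] [LieAlgebra ℂ L]
    (H : LieSubalgebra ℂ L) [H.IsCartanSubalgebra]
    (l : ℕ) (αs : Fin l → Module.Dual ℂ H)
    (Δplus : Finset (Module.Dual ℂ H))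
    -- every element of `Δplus` is a root:
    (hroot : ∀ α ∈ Δplus, (α : Module.Dual ℂ H) ≠ 0 ∧
      LieAlgebra.rootSpace H (α : H → ℂ) ≠ ⊥)
    -- every positive root is a nonnegative integral combination of simple roots:
    (hcomb : ∀ α ∈ Δplus, ∃ k : Fin l → ℕ, α = ∑ i, (k i : ℂ) • αs i)
    -- no two distinct positive roots are proportional:
    (hprop : ∀ α ∈ Δplus, ∀ β ∈ Δplus, α ≠ β → ∀ c : ℂ, α ≠ c • β)
    (μ : H)
    (halg : AlgebraicIndependent ℚ (fun i : Fin l => (αs i) μ)) :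
    LinearIndependent ℚ (fun α : Δplus => ((α : Module.Dual ℂ H) μ)⁻¹) := by
  choose k hk using fun α : Δplus => hcomb α α.2
  let c : Δplus → Fin l →₀ ℚ := fun α => Finsupp.equivFunOnFinite.symm fun i => (k α i : ℚ)
  have hc : ∀ α, c α ≠ 0 := by
    intro α h
    apply (hroot α α.2).1
    rw [hk α]
    have hk0 : ∀ i, k α i = 0 := fun i => by simpa [c] using DFunLike.congr_fun h i
    simp [hk0]
  have heval : ∀ α : Δplus,
      MvPolynomial.aeval (fun i => αs i μ) (MvPolynomial.sumSMulX (c α)) = α.1 μ := by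
    intro α
    rw [MvPolynomial.aeval_sumSMulX, hk α]
    simp [c, Rat.smul_def]
  have hassoc : Pairwise fun α β =>
      ¬Associated (MvPolynomial.sumSMulX (c α)) (MvPolynomial.sumSMulX (c β)) := by
    intro α β hαβ h
    obtain ⟨r, hr⟩ := MvPolynomial.exists_eq_smul_of_associated_sumSMulX h
    apply hprop β β.2 α α.2 (fun h => hαβ (Subtype.ext h).symm) r
    rw [hk α, hk β, smul_sum]
    refine sum_congr rfl fun i _ => ?_
    have hri : (k β i : ℚ) = r * k α i := by simpa [c] using DFunLike.congr_fun hr i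
    rw [smul_smul]
    congr 1
    exact_mod_cast hri
  simpa [heval] using
    linearIndependent_inv_of_prime halg (fun α => MvPolynomial.prime_sumSMulX (hc α)) hassoc

/-- Let `Δ₊` be the set of positive roots of a semisimple complex Lie algebra `g`
with respect to a Cartan subalgebra `h`, with simple roots `α₁, …, α_l`.
If `μ ∈ h` is chosen so that the values `α₁(μ), …, α_l(μ)` are algebraically
independent over `ℚ`, then the numbers `1 / ⟨α, μ⟩`, for `α ∈ Δ₊`, are
linearly independent over `ℚ`.

The relevant structural facts about the positive roots (recorded in the
context) are taken as hypotheses: every positive root is a nonzero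
nonnegative-integral combination of the simple roots `αs 1, …, αs l`, and no
two distinct positive roots are proportional. -/
theorem stmt_3 (L : Type) [LieRing L] [LieAlgebra ℂ L] [Module.Finite ℂ L]
    [LieAlgebra.IsSemisimple ℂ L]
    (H : LieSubalgebra ℂ L) [H.IsCartanSubalgebra]
    (l : ℕ) (αs : Fin l → Module.Dual ℂ H)
    (Δplus : Finset (Module.Dual ℂ H))
    -- every element of `Δplus` is a root:
    (hroot : ∀ α ∈ Δplus, (α : Module.Dual ℂ H) ≠ 0 ∧
      LieAlgebra.rootSpace H (α : H → ℂ) ≠ ⊥)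
    -- the simple roots are positive roots:
    (hsimple : ∀ i, αs i ∈ Δplus)
    -- every positive root is a nonnegative integral combination of simple roots:
    (hcomb : ∀ α ∈ Δplus, ∃ k : Fin l → ℕ, α = ∑ i, (k i : ℂ) • αs i)
    -- no two distinct positive roots are proportional:
    (hprop : ∀ α ∈ Δplus, ∀ β ∈ Δplus, α ≠ β → ∀ c : ℂ, α ≠ c • β)
    (μ : H)
    (halg : AlgebraicIndependent ℚ (fun i : Fin l => (αs i) μ)) :
    LinearIndependent ℚ (fun α : Δplus => ((α : Module.Dual ℂ H) μ)⁻¹) :=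
  stmt_3_general L H l αs Δplus hroot hcomb hprop μ halg
end

section
/- Let g be a semisimple complex Lie algebra, γ ∈ g* a linear functional, and for t ∈ ℂ let S(g)_t denote S(g) equipped with the Poisson bracket t{·,·} + (1−t){·,·}_γ, where {·,·} is the Poisson–Lie bracket and {x,y}_γ = γ([x,y]) for x,y ∈ g. For t ≠ 0, the algebra map ψ_t : S(g) → S(g) defined on generators x ∈ g by ψ_t(x) = t^{−1} x + t^{−2}(1−t) γ(x) is an isomorphism of Poisson algebras from S(g)_1 to S(g)_t. Moreover, if γ vanishes on all root vectors e_α (α ∈ Δ), then ψ_t maps the subspace Q_μ = { Σ_{α∈Δ₊} (⟨α,h⟩/⟨α,μ⟩) e_α e_{−α} : h ∈ h } onto itself. -/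
/-!
`ψ_t` is induced by the affine substitution `x ↦ t⁻¹ x + t⁻²(1 - t) γ(x)` of the generators, so
the inverse substitution induces its inverse. Both sides of the Poisson identity are skew
biderivations along `ψ_t`, so it suffices to check it on generators; there the brackets ignore the
constant terms of `ψ_t x` and `ψ_t y` and just scale by `t⁻²`, which turns `t{x,y} + (1-t)γ[x,y]`
into `ψ_t [x,y]`. If `γ` kills the root vectors then `ψ_t (e_α e_{-α}) = t⁻² e_α e_{-α}`, so `ψ_t`
acts on `Q_μ` as the reparametrisation `h ↦ t⁻² h` of `𝔥`.
-/

section SymmetricAlgebra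

variable {R M A : Type} [CommRing R] [AddCommGroup M] [Module R M] [CommRing A] [Algebra R A]

theorem isSymmetricAlgebra_of_existsUnique_lift {f : M →ₗ[R] A}
    (huniv : ∀ (B : Type) [CommRing B] [Algebra R B] (g : M →ₗ[R] B),
      ∃! F : A →ₐ[R] B, ∀ x : M, F (f x) = g x) :
    IsSymmetricAlgebra f := by
  obtain ⟨F, hF, -⟩ := huniv (SymmetricAlgebra R M) (SymmetricAlgebra.ι R M)
  obtain ⟨G, -, hG⟩ := huniv A f
  have hleft : (SymmetricAlgebra.lift f).comp F = AlgHom.id R A :=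
    (hG _ fun x => by simp [hF]).trans (hG _ fun x => rfl).symm
  have hright : F.comp (SymmetricAlgebra.lift f) = AlgHom.id R (SymmetricAlgebra R M) :=
    SymmetricAlgebra.algHom_ext (LinearMap.ext fun x => by simp [hF])
  exact .of_equiv (.ofAlgHom _ _ hleft hright) (by ext; simp)

end SymmetricAlgebra

theorem LinearMap.map_algebraMap_of_leibniz {R A : Type*} [CommRing R] [CommRing A] [Algebra R A]
    (D : A →ₗ[R] A) (hD : ∀ a b, D (a * b) = a * D b + b * D a) (r : R) :
    D (algebraMap R A r) = 0 := by
  have h1 : D 1 = 0 := by simpa using hD 1 1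
  rw [Algebra.algebraMap_eq_smul_one, map_smul, h1, smul_zero]

structure IsSkewBiderivation {R A : Type*} [CommRing R] [CommRing A] [Algebra R A]
    (P : A →ₗ[R] A →ₗ[R] A) : Prop where
  skew : ∀ a b, P a b = - P b a
  leibniz : ∀ a b c, P a (b * c) = b * P a c + c * P a b

namespace IsSkewBiderivation

variable {R A : Type*} [CommRing R] [CommRing A] [Algebra R A] {P Q : A →ₗ[R] A →ₗ[R] A}

theorem add (hP : IsSkewBiderivation P) (hQ : IsSkewBiderivation Q) :
    IsSkewBiderivation (P + Q) where
  skew a b := by simp only [LinearMap.add_apply, hP.skew a b, hQ.skew a b, neg_add]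
  leibniz a b c := by simp only [LinearMap.add_apply, hP.leibniz, hQ.leibniz]; ring

theorem smul (hP : IsSkewBiderivation P) (r : R) : IsSkewBiderivation (r • P) where
  skew a b := by simp only [LinearMap.smul_apply, hP.skew a b, smul_neg]
  leibniz a b c := by
    simp only [LinearMap.smul_apply, hP.leibniz, smul_add, mul_smul_comm]

theorem apply_algebraMap (hP : IsSkewBiderivation P) (a : A) (r : R) :
    P a (algebraMap R A r) = 0 :=
  (P a).map_algebraMap_of_leibniz (hP.leibniz a) r

theorem algebraMap_apply (hP : IsSkewBiderivation P) (r : R) (a : A) :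
    P (algebraMap R A r) a = 0 := by
  rw [hP.skew, hP.apply_algebraMap, neg_zero]

theorem apply_smul_add_algebraMap (hP : IsSkewBiderivation P) (a b : A) (c d c' d' : R) :
    P (c • a + algebraMap R A d) (c' • b + algebraMap R A d') = (c * c') • P a b := by
  simp only [map_add, map_smul, LinearMap.add_apply, LinearMap.smul_apply, hP.apply_algebraMap,
    hP.algebraMap_apply, smul_zero, add_zero, smul_smul, mul_comm c']

end IsSkewBiderivation

namespace IsSymmetricAlgebra

variable {R M A B : Type*} [CommRing R] [AddCommGroup M] [Module R M] [CommRing A] [Algebra R A]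
  [CommRing B] [Algebra R B] {f : M →ₗ[R] A}

theorem map_apply_of_leibniz (h : IsSymmetricAlgebra f) (φ : A →ₐ[R] B) {D : A →ₗ[R] A}
    {E : B →ₗ[R] B} (hD : ∀ a b, D (a * b) = a * D b + b * D a)
    (hE : ∀ a b, E (a * b) = a * E b + b * E a) (hgen : ∀ x, φ (D (f x)) = E (φ (f x)))
    (a : A) : φ (D a) = E (φ a) := by
  induction a using h.induction with
  | algebraMap r =>
    rw [D.map_algebraMap_of_leibniz hD, AlgHom.commutes, E.map_algebraMap_of_leibniz hE, map_zero]
  | ι x => exact hgen x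
  | mul a b iha ihb => rw [hD, map_add, map_mul, map_mul, iha, ihb, map_mul, hE]
  | add a b iha ihb => rw [map_add, map_add, iha, ihb, map_add, map_add]

theorem map_apply_apply_of_generators (h : IsSymmetricAlgebra f) (φ : A →ₐ[R] B)
    {P : A →ₗ[R] A →ₗ[R] A} {Q : B →ₗ[R] B →ₗ[R] B} (hP : IsSkewBiderivation P)
    (hQ : IsSkewBiderivation Q) (hgen : ∀ x y, φ (P (f x) (f y)) = Q (φ (f x)) (φ (f y)))
    (a b : A) : φ (P a b) = Q (φ a) (φ b) := by
  have hfst (x : M) (b : A) : φ (P (f x) b) = Q (φ (f x)) (φ b) :=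
    h.map_apply_of_leibniz φ (hP.leibniz _) (hQ.leibniz _) (hgen x) b
  -- skew-symmetry moves the generator from the first slot to the second
  refine h.map_apply_of_leibniz φ (hP.leibniz a) (hQ.leibniz (φ a)) (fun y => ?_) b
  rw [hP.skew, map_neg, hfst, hQ.skew, neg_neg]

theorem bijective_of_map_eq_smul_add_algebraMap {K A : Type*} [Field K] [Module K M]
    [CommRing A] [Algebra K A] {f : M →ₗ[K] A} (h : IsSymmetricAlgebra f) (φ : A →ₐ[K] A)
    {c : K} (hc : c ≠ 0) (β : Module.Dual K M)
    (hφ : ∀ x, φ (f x) = c • f x + algebraMap K A (β x)) : Function.Bijective φ := by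
  set φinv := h.lift (c⁻¹ • f - (Algebra.linearMap K A).comp (c⁻¹ • β))
  have hφinv (x : M) : φinv (f x) = c⁻¹ • f x - algebraMap K A (c⁻¹ * β x) := by simp [φinv]
  have hleft : φinv.comp φ = AlgHom.id K A := h.algHom_ext <| LinearMap.ext fun x => by
    simp [hφ, hφinv, Algebra.algebraMap_eq_smul_one]
    match_scalars <;> field_simp; ring
  have hright : φ.comp φinv = AlgHom.id K A := h.algHom_ext <| LinearMap.ext fun x => by
    simp [hφ, hφinv, Algebra.algebraMap_eq_smul_one]
    match_scalars <;> field_simp; ring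
  exact (AlgEquiv.ofAlgHom φ φinv hright hleft).bijective

end IsSymmetricAlgebra

theorem stmt_5_general (L : Type) [LieRing L] [LieAlgebra ℂ L]
    (H : LieSubalgebra ℂ L)
    (Δplus : Finset (Module.Dual ℂ H))
    (e : Module.Dual ℂ H → L)
    -- the symmetric algebra `S(g)`:
    (S : Type) [CommRing S] [Algebra ℂ S] (ι : L →ₗ[ℂ] S)
    (huniv : ∀ (A : Type) [CommRing A] [Algebra ℂ A] (f : L →ₗ[ℂ] A),
      ∃! g : S →ₐ[ℂ] A, ∀ x : L, g (ι x) = f x)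
    -- the Poisson–Lie bracket and the frozen bracket:
    (P : S →ₗ[ℂ] S →ₗ[ℂ] S)
    (hPskew : ∀ f g : S, P f g = - P g f)
    (hPleib : ∀ f g h : S, P f (g * h) = g * P f h + h * P f g)
    (hPgen : ∀ x y : L, P (ι x) (ι y) = ι ⁅x, y⁆)
    (γ : Module.Dual ℂ L)
    (Pγ : S →ₗ[ℂ] S →ₗ[ℂ] S)
    (hPγskew : ∀ f g : S, Pγ f g = - Pγ g f)
    (hPγleib : ∀ f g h : S, Pγ f (g * h) = g * Pγ f h + h * Pγ f g)
    (hPγgen : ∀ x y : L, Pγ (ι x) (ι y) = algebraMap ℂ S (γ ⁅x, y⁆))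
    -- `ψ_t` for `t ≠ 0`:
    (t : ℂ) (ht : t ≠ 0)
    (ψ : S →ₐ[ℂ] S)
    (hψ : ∀ x : L, ψ (ι x) = t⁻¹ • ι x + algebraMap ℂ S ((t ^ 2)⁻¹ * (1 - t) * γ x))
    -- a regular element `μ` of the Cartan subalgebra:
    (μ : H) :
    -- `ψ_t` is bijective …
    Function.Bijective ψ ∧
    -- … and a morphism of Poisson algebras `S(g)_1 → S(g)_t`:
    (∀ f g : S, ψ (P f g) = t • P (ψ f) (ψ g) + (1 - t) • Pγ (ψ f) (ψ g)) ∧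
    -- moreover, if `γ` vanishes on all root vectors, `ψ_t` maps `Q_μ` onto itself:
    ((∀ α ∈ Δplus, γ (e α) = 0 ∧ γ (e (-α)) = 0) →
      ψ '' Set.range (fun h : H => ∑ α ∈ Δplus,
          ((α : Module.Dual ℂ H) h / (α : Module.Dual ℂ H) μ) •
          (ι (e α) * ι (e (-α)))) =
        Set.range (fun h : H => ∑ α ∈ Δplus,
          ((α : Module.Dual ℂ H) h / (α : Module.Dual ℂ H) μ) •
          (ι (e α) * ι (e (-α))))) := by
  have hS := isSymmetricAlgebra_of_existsUnique_lift huniv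
  have hP : IsSkewBiderivation P := ⟨hPskew, hPleib⟩
  have hPγ : IsSkewBiderivation Pγ := ⟨hPγskew, hPγleib⟩
  refine ⟨hS.bijective_of_map_eq_smul_add_algebraMap ψ (inv_ne_zero ht)
    (((t ^ 2)⁻¹ * (1 - t)) • γ) (by simpa using hψ), fun f g => ?_, fun hγ => ?_⟩
  · have hgen (x y : L) :
        ψ (P (ι x) (ι y)) = t • P (ψ (ι x)) (ψ (ι y)) + (1 - t) • Pγ (ψ (ι x)) (ψ (ι y)) := by
      rw [hPgen, hψ, hψ, hψ, hP.apply_smul_add_algebraMap, hPγ.apply_smul_add_algebraMap, hPgen,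
        hPγgen, Algebra.algebraMap_eq_smul_one, Algebra.algebraMap_eq_smul_one]
      match_scalars <;> field_simp
    simpa using hS.map_apply_apply_of_generators ψ hP ((hP.smul t).add (hPγ.smul (1 - t)))
      (by simpa using hgen) f g
  · set Q : H → S := fun h => ∑ α ∈ Δplus,
      ((α : Module.Dual ℂ H) h / (α : Module.Dual ℂ H) μ) • (ι (e α) * ι (e (-α)))
    have hψQ (h : H) : ψ (Q h) = Q ((t ^ 2)⁻¹ • h) := by
      refine (map_sum ψ _ _).trans (Finset.sum_congr rfl fun α hα => ?_)
      simp only [map_smul, map_mul, hψ, (hγ α hα).1, (hγ α hα).2, mul_zero, map_zero, add_zero,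
        smul_mul_smul_comm, smul_smul]
      rw [smul_eq_mul]
      congr 1
      field_simp
    have hscale : Function.Surjective ((t ^ 2)⁻¹ • · : H → H) :=
      (isUnit_iff_ne_zero.mpr (inv_ne_zero (pow_ne_zero 2 ht))).smul_bijective.surjective
    rw [← Set.range_comp, show ψ ∘ Q = Q ∘ ((t ^ 2)⁻¹ • ·) from funext hψQ, hscale.range_comp]

/-- Let `g` be semisimple, `γ ∈ g*`, and for `t ∈ ℂ` let `S(g)_t` be `S(g)` with
the Poisson bracket `t{·,·} + (1−t){·,·}_γ`.  For `t ≠ 0`, the algebra map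
`ψ_t : S(g) → S(g)` with `ψ_t(x) = t⁻¹x + t⁻²(1−t)γ(x)` on generators
`x ∈ g` is an isomorphism of Poisson algebras `S(g)_1 → S(g)_t`.  Moreover,
if `γ` vanishes on all root vectors `e_α` (`α ∈ Δ`), then `ψ_t` maps the
subspace `Q_μ = { Σ_{α∈Δ₊} (⟨α,h⟩/⟨α,μ⟩) e_α e_{−α} : h ∈ h }` onto
itself. -/
theorem stmt_5 (L : Type) [LieRing L] [LieAlgebra ℂ L] [Module.Finite ℂ L]
    [LieAlgebra.IsSemisimple ℂ L]
    (H : LieSubalgebra ℂ L) [H.IsCartanSubalgebra]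
    (B : L →ₗ[ℂ] L →ₗ[ℂ] ℂ)
    (hBsymm : ∀ x y : L, B x y = B y x)
    (hBinv : ∀ x y z : L, B ⁅x, y⁆ z = B x ⁅y, z⁆)
    (hBnondeg : ∀ x : L, (∀ y : L, B x y = 0) → x = 0)
    (Δplus : Finset (Module.Dual ℂ H))
    (e : Module.Dual ℂ H → L)
    (he_root : ∀ α ∈ Δplus, e α ∈ LieAlgebra.rootSpace H (α : H → ℂ) ∧
      e (-α) ∈ LieAlgebra.rootSpace H ((-α : Module.Dual ℂ H) : H → ℂ))
    (he_ne : ∀ α ∈ Δplus, e α ≠ 0 ∧ e (-α) ≠ 0)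
    (he_pair : ∀ α ∈ Δplus, B (e α) (e (-α)) = 1)
    -- the symmetric algebra `S(g)`:
    (S : Type) [CommRing S] [Algebra ℂ S] (ι : L →ₗ[ℂ] S)
    (huniv : ∀ (A : Type) [CommRing A] [Algebra ℂ A] (f : L →ₗ[ℂ] A),
      ∃! g : S →ₐ[ℂ] A, ∀ x : L, g (ι x) = f x)
    -- the Poisson–Lie bracket and the frozen bracket:
    (P : S →ₗ[ℂ] S →ₗ[ℂ] S)
    (hPskew : ∀ f g : S, P f g = - P g f)
    (hPleib : ∀ f g h : S, P f (g * h) = g * P f h + h * P f g)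
    (hPgen : ∀ x y : L, P (ι x) (ι y) = ι ⁅x, y⁆)
    (γ : Module.Dual ℂ L)
    (Pγ : S →ₗ[ℂ] S →ₗ[ℂ] S)
    (hPγskew : ∀ f g : S, Pγ f g = - Pγ g f)
    (hPγleib : ∀ f g h : S, Pγ f (g * h) = g * Pγ f h + h * Pγ f g)
    (hPγgen : ∀ x y : L, Pγ (ι x) (ι y) = algebraMap ℂ S (γ ⁅x, y⁆))
    -- `ψ_t` for `t ≠ 0`:
    (t : ℂ) (ht : t ≠ 0)
    (ψ : S →ₐ[ℂ] S)
    (hψ : ∀ x : L, ψ (ι x) = t⁻¹ • ι x + algebraMap ℂ S ((t ^ 2)⁻¹ * (1 - t) * γ x))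
    -- a regular element `μ` of the Cartan subalgebra:
    (μ : H) (hμreg : ∀ α ∈ Δplus, α μ ≠ 0) :
    -- `ψ_t` is bijective …
    Function.Bijective ψ ∧
    -- … and a morphism of Poisson algebras `S(g)_1 → S(g)_t`:
    (∀ f g : S, ψ (P f g) = t • P (ψ f) (ψ g) + (1 - t) • Pγ (ψ f) (ψ g)) ∧
    -- moreover, if `γ` vanishes on all root vectors, `ψ_t` maps `Q_μ` onto itself:
    ((∀ α ∈ Δplus, γ (e α) = 0 ∧ γ (e (-α)) = 0) →
      ψ '' Set.range (fun h : H => ∑ α ∈ Δplus,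
          ((α : Module.Dual ℂ H) h / (α : Module.Dual ℂ H) μ) •
          (ι (e α) * ι (e (-α)))) =
        Set.range (fun h : H => ∑ α ∈ Δplus,
          ((α : Module.Dual ℂ H) h / (α : Module.Dual ℂ H) μ) •
          (ι (e α) * ι (e (-α))))) :=
  stmt_5_general L H Δplus e S ι huniv P hPskew hPleib hPgen γ Pγ hPγskew hPγleib hPγgen t ht ψ hψ μ
end
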